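/- arXiv:1806.02441 — 6 statements merged into one kernel-verified Lean document; each statement's English description precedes it below -/
import Mathlib

section
/- (Extended Andréief/Cauchy–Binet integral formula) Let m ≤ n, let f_1,…,f_m and g_1,…,g_n be measurable functions on a measure space Ω with f_i·g_j integrable for all i, j, and let C be an n × (n−m) complex matrix. Then ∫_{Ω^m} det(f_i(x_j))_{1≤i,j≤m} · det( (g_i(x_j))_{1≤i≤n, 1≤j≤m} | C ) dx_1⋯dx_m = m! · det( (∫_Ω f_i g_j dx)_{1≤j≤n, 1≤i≤m} | C ), where on the left (A | C) denotes the n × n matrix whose first m columns are g_i(x_j) and last n−m columns are C, and on the right the matrix is the n × n matrix whose (j,i) entry for i ≤ m is ∫_Ω f_i(x) g_j(x) dx and whose last n−m columns are given by C. -/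
open MeasureTheory Matrix Finset

/-- extended Andréief/Cauchy–Binet integral formula:
for `m ≤ n`, measurable `f₁,…,f_m`, `g₁,…,g_n` with each `fᵢ·gⱼ` integrable,
and an `n × (n-m)` matrix `C`,
`∫_{Ω^m} det(fᵢ(xⱼ)) det((gᵢ(xⱼ)) | C) dx = m! · det((∫ fᵢ gⱼ) | C)`,
where in both `n × n` matrices the first `m` columns are as indicated and the
last `n - m` columns are given by `C`. -/
theorem stmt2 {Ω : Type*} [MeasurableSpace Ω] (μ : Measure Ω) [SigmaFinite μ]
    (m n : ℕ) (hmn : m ≤ n)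
    (f : Fin m → Ω → ℂ) (g : Fin n → Ω → ℂ)
    (hf : ∀ i, Measurable (f i)) (hg : ∀ j, Measurable (g j))
    (hint : ∀ i j, Integrable (fun x => f i x * g j x) μ)
    (C : Matrix (Fin n) (Fin (n - m)) ℂ) :
    ∫ x : Fin m → Ω,
        (Matrix.det (Matrix.of fun i j : Fin m => f i (x j))) *
          (Matrix.det (Matrix.of fun (i : Fin n) (c : Fin n) =>
            if h : (c : ℕ) < m then g i (x ⟨c, h⟩)
            else C i ⟨(c : ℕ) - m, by omega⟩))
        ∂(Measure.pi fun _ : Fin m => μ) =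
      (m.factorial : ℂ) *
        Matrix.det (Matrix.of fun (j : Fin n) (c : Fin n) =>
          if h : (c : ℕ) < m then ∫ x, f ⟨c, h⟩ x * g j x ∂μ
          else C j ⟨(c : ℕ) - m, by omega⟩) := by
  classical
  letI : MeasureSpace Ω := ⟨μ⟩
  haveI : SigmaFinite (volume : Measure Ω) := ‹SigmaFinite μ›
  have hnm : m + (n - m) = n := by omega
  set E : Fin m ⊕ Fin (n - m) ≃ Fin n := finSumFinEquiv.trans (finCongr hnm) with hEdef
  have hEl : ∀ j : Fin m, ((E (Sum.inl j)) : ℕ) = (j : ℕ) := by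
    intro j; simp [hEdef]
  have hEr : ∀ k : Fin (n - m), ((E (Sum.inr k)) : ℕ) = m + (k : ℕ) := by
    intro k; simp [hEdef]
  -- the equivalence used to extend a permutation of `Fin m` to `Fin n`
  let e : Fin m ≃ {c : Fin n // (c : ℕ) < m} :=
    { toFun := fun j => ⟨E (Sum.inl j), by rw [hEl]; exact j.2⟩
      invFun := fun c => ⟨(c : ℕ), c.2⟩
      left_inv := fun j => by ext; exact hEl j
      right_inv := fun c => by
        ext
        exact hEl ⟨(c : ℕ), c.2⟩ }
  have hσl : ∀ (σ : Equiv.Perm (Fin m)) (j : Fin m),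
      (σ.extendDomain e) (E (Sum.inl j)) = E (Sum.inl (σ j)) := by
    intro σ j
    exact Equiv.Perm.extendDomain_apply_image σ e j
  have hσr : ∀ (σ : Equiv.Perm (Fin m)) (k : Fin (n - m)),
      (σ.extendDomain e) (E (Sum.inr k)) = E (Sum.inr k) := by
    intro σ k
    refine Equiv.Perm.extendDomain_apply_not_subtype σ e ?_
    rw [hEr]; omega
  -- the target matrix
  set B : Matrix (Fin n) (Fin n) ℂ := Matrix.of fun (j : Fin n) (c : Fin n) =>
      if h : (c : ℕ) < m then ∫ x, f ⟨c, h⟩ x * g j x ∂μ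
      else C j ⟨(c : ℕ) - m, by omega⟩ with hBdef
  have hBl : ∀ (i : Fin n) (j : Fin m),
      B i (E (Sum.inl j)) = ∫ x, f j x * g i x ∂μ := by
    intro i j
    have h1 : ((E (Sum.inl j)) : ℕ) < m := by rw [hEl]; exact j.2
    have h2 : (⟨((E (Sum.inl j)) : ℕ), h1⟩ : Fin m) = j := Fin.ext (hEl j)
    simp only [hBdef, Matrix.of_apply, dif_pos h1, h2]
  have hBr : ∀ (i : Fin n) (k : Fin (n - m)),
      B i (E (Sum.inr k)) = C i k := by
    intro i k
    have h1 : ¬ ((E (Sum.inr k)) : ℕ) < m := by rw [hEr]; omega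
    simp only [hBdef, Matrix.of_apply, dif_neg h1]
    congr 1
    ext
    simp only [hEr]
    omega
  -- constants
  set K : Equiv.Perm (Fin n) → ℂ := fun τ => ∏ k : Fin (n - m), C (τ (E (Sum.inr k))) k
    with hKdef
  set ε₁ : Equiv.Perm (Fin m) → ℂ := fun σ => ((Equiv.Perm.sign σ : ℤ) : ℂ) with hε₁
  set ε₂ : Equiv.Perm (Fin n) → ℂ := fun τ => ((Equiv.Perm.sign τ : ℤ) : ℂ) with hε₂
  -- Step 1: pointwise expansion of the integrand
  have hpoint : ∀ x : Fin m → Ω,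
      (Matrix.det (Matrix.of fun i j : Fin m => f i (x j))) *
        (Matrix.det (Matrix.of fun (i : Fin n) (c : Fin n) =>
          if h : (c : ℕ) < m then g i (x ⟨c, h⟩)
          else C i ⟨(c : ℕ) - m, by omega⟩)) =
      ∑ σ : Equiv.Perm (Fin m), ∑ τ : Equiv.Perm (Fin n),
        (ε₁ σ * ε₂ τ * K τ) *
          ∏ j : Fin m, (f (σ j) (x j) * g (τ (E (Sum.inl j))) (x j)) := by
    intro x
    rw [Matrix.det_apply', Matrix.det_apply', Finset.sum_mul_sum]
    refine Finset.sum_congr rfl fun σ _ => Finset.sum_congr rfl fun τ _ => ?_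
    have hprod : ∏ c : Fin n, (Matrix.of fun (i : Fin n) (c : Fin n) =>
          if h : (c : ℕ) < m then g i (x ⟨c, h⟩)
          else C i ⟨(c : ℕ) - m, by omega⟩) (τ c) c =
        (∏ j : Fin m, g (τ (E (Sum.inl j))) (x j)) * K τ := by
      rw [← Equiv.prod_comp E, Fintype.prod_sum_type]
      congr 1
      · refine Finset.prod_congr rfl fun j _ => ?_
        have h1 : ((E (Sum.inl j)) : ℕ) < m := by rw [hEl]; exact j.2
        have h2 : (⟨((E (Sum.inl j)) : ℕ), h1⟩ : Fin m) = j := Fin.ext (hEl j)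
        simp only [Matrix.of_apply, dif_pos h1, h2]
      · refine Finset.prod_congr rfl fun k _ => ?_
        have h1 : ¬ ((E (Sum.inr k)) : ℕ) < m := by rw [hEr]; omega
        simp only [Matrix.of_apply, dif_neg h1]
        congr 1
        ext
        simp only [hEr]
        omega
    rw [hprod, Finset.prod_mul_distrib]
    simp only [Matrix.of_apply, hε₁, hε₂]
    ring
  rw [MeasureTheory.integral_congr_ae (Filter.Eventually.of_forall hpoint)]
  -- Step 2: integrability and exchanging sum and integral
  have hvol : (Measure.pi fun _ : Fin m => μ) = (volume : Measure (Fin m → Ω)) := rfl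
  have hintST : ∀ (σ : Equiv.Perm (Fin m)) (τ : Equiv.Perm (Fin n)),
      Integrable (fun x : Fin m → Ω =>
        (ε₁ σ * ε₂ τ * K τ) *
          ∏ j : Fin m, (f (σ j) (x j) * g (τ (E (Sum.inl j))) (x j)))
        (Measure.pi fun _ : Fin m => μ) := by
    intro σ τ
    rw [hvol]
    exact (Integrable.fintype_prod
      (f := fun (j : Fin m) (y : Ω) => f (σ j) y * g (τ (E (Sum.inl j))) y)
      (fun j => hint (σ j) (τ (E (Sum.inl j))))).const_mul _
  rw [MeasureTheory.integral_finset_sum _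
    (fun σ _ => MeasureTheory.integrable_finset_sum _ (fun τ _ => hintST σ τ))]
  have hstep : ∀ σ : Equiv.Perm (Fin m),
      (∫ x : Fin m → Ω, ∑ τ : Equiv.Perm (Fin n),
        (ε₁ σ * ε₂ τ * K τ) *
          ∏ j : Fin m, (f (σ j) (x j) * g (τ (E (Sum.inl j))) (x j))
        ∂(Measure.pi fun _ : Fin m => μ)) =
      ∑ τ : Equiv.Perm (Fin n),
        (ε₁ σ * ε₂ τ * K τ) *
          ∏ j : Fin m, ∫ y, f (σ j) y * g (τ (E (Sum.inl j))) y ∂μ := by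
    intro σ
    rw [MeasureTheory.integral_finset_sum _ (fun τ _ => hintST σ τ)]
    refine Finset.sum_congr rfl fun τ _ => ?_
    rw [MeasureTheory.integral_const_mul,
      MeasureTheory.integral_fintype_prod_eq_prod
        (f := fun (j : Fin m) (y : Ω) => f (σ j) y * g (τ (E (Sum.inl j))) y)]
  simp only [hstep]
  -- Step 3: for each σ, the τ-sum is `sign σ * det B`
  have hdetB : ∀ σ : Equiv.Perm (Fin m),
      ∑ τ : Equiv.Perm (Fin n),
        (ε₁ σ * ε₂ τ * K τ) *
          ∏ j : Fin m, ∫ y, f (σ j) y * g (τ (E (Sum.inl j))) y ∂μ =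
      ε₁ σ * (ε₁ σ * B.det) := by
    intro σ
    have hsub : (B.submatrix id (σ.extendDomain e)).det = ε₁ σ * B.det := by
      rw [Matrix.det_permute' (σ.extendDomain e) B]
      congr 2
      rw [Equiv.Perm.sign_extendDomain]
    rw [← hsub, Matrix.det_apply']
    rw [Finset.mul_sum]
    refine Finset.sum_congr rfl fun τ _ => ?_
    have hprod : ∏ c : Fin n, (B.submatrix id (σ.extendDomain e)) (τ c) c =
        (∏ j : Fin m, ∫ y, f (σ j) y * g (τ (E (Sum.inl j))) y ∂μ) * K τ := by
      rw [← Equiv.prod_comp E, Fintype.prod_sum_type]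
      congr 1
      · refine Finset.prod_congr rfl fun j _ => ?_
        rw [Matrix.submatrix_apply, id_eq, hσl σ j, hBl]
      · refine Finset.prod_congr rfl fun k _ => ?_
        rw [Matrix.submatrix_apply, id_eq, hσr σ k, hBr]
    rw [hprod, hε₂]
    ring
  simp only [hdetB]
  -- Step 4: sum the signs
  have hsq : ∀ σ : Equiv.Perm (Fin m), ε₁ σ * (ε₁ σ * B.det) = B.det := by
    intro σ
    rw [← mul_assoc, hε₁, ← Int.cast_mul, ← Units.val_mul, Int.units_mul_self]
    simp
  simp only [hsq, Finset.sum_const, Finset.card_univ, Fintype.card_perm, Fintype.card_fin,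
    nsmul_eq_mul]
end

section
/- Let λ be a partition of length at most n and set k_i = λ_i + n − i for 1 ≤ i ≤ n. Then the product of the hook lengths of λ equals ∏_{i=1}^n k_i! / Δ(k_1, …, k_n), where Δ(k) = ∏_{i<j} (k_i − k_j). -/
/-!
Write `kᵢ = λᵢ + n - 1 - i` (rows indexed from `0`). The classical observation is that, for
each row `i`, the hook lengths of the boxes in row `i` and the differences `kᵢ - kⱼ` for
`i < j < n` together are exactly the numbers `1, …, kᵢ`, each once. Multiplying over the rows
gives `h(λ) · Δ(k) = ∏ kᵢ!` in `ℕ`, and `Δ(k) ≠ 0` because `k` is strictly decreasing.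
-/

open Finset

/-- The product of the hook lengths of a partition with at most `n` parts,
given by the (weakly decreasing) row-length function `l`.  The hook length of
the (0-indexed) box `(i,j)` is `(l i - j - 1) + #{i' > i | l i' > j} + 1`
(arm + leg + 1). -/
def hookProd (n : ℕ) (l : ℕ → ℕ) : ℕ :=
  ∏ i ∈ Finset.range n, ∏ j ∈ Finset.range (l i),
    (l i - j + ((Finset.Ico (i + 1) n).filter (fun i' => j < l i')).card)

theorem Finset.prod_mul_prod_eq_prod_of_images_partition {ι κ α M : Type*} [DecidableEq α]
    [CommMonoid M] {s : Finset ι} {u : Finset κ} {t : Finset α} {f : ι → α} {g : κ → α}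
    (φ : α → M) (hf : Set.InjOn f s) (hg : Set.InjOn g u) (hfs : Set.MapsTo f s t)
    (hgu : Set.MapsTo g u t) (hfg : ∀ x ∈ s, ∀ y ∈ u, f x ≠ g y)
    (hcard : #t ≤ #s + #u) :
    (∏ x ∈ s, φ (f x)) * ∏ y ∈ u, φ (g y) = ∏ z ∈ t, φ z := by
  have hdisj : Disjoint (s.image f) (u.image g) := by
    simp only [disjoint_left, mem_image]
    rintro _ ⟨x, hx, rfl⟩ ⟨y, hy, hxy⟩
    exact hfg x hx y hy hxy.symm
  have hunion : s.image f ∪ u.image g = t := by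
    refine eq_of_subset_of_card_le (union_subset ?_ ?_) ?_
    · exact image_subset_iff.2 hfs
    · exact image_subset_iff.2 hgu
    · rwa [card_union_of_disjoint hdisj, card_image_of_injOn hf, card_image_of_injOn hg]
  rw [← prod_image hf, ← prod_image hg, ← prod_union hdisj, hunion]

section Hooks

variable {n : ℕ} {l : ℕ → ℕ} {i c : ℕ}

def leg (n : ℕ) (l : ℕ → ℕ) (i c : ℕ) : ℕ := #{j ∈ Ioo i n | c < l j}

def hookLength (n : ℕ) (l : ℕ → ℕ) (i c : ℕ) : ℕ := l i - c + leg n l i c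

-- The paper's `kᵢ`, for `0`-based row indices.
def betaNumber (n : ℕ) (l : ℕ → ℕ) (i : ℕ) : ℕ := l i + (n - 1 - i)

theorem hookProd_eq_prod_hookLength (n : ℕ) (l : ℕ → ℕ) :
    hookProd n l = ∏ i ∈ range n, ∏ c ∈ range (l i), hookLength n l i c := by
  simp only [hookProd, hookLength, leg, Ico_add_one_left_eq_Ioo]

theorem leg_antitone : Antitone (leg n l i) := fun _ _ hcc' =>
  card_le_card fun j hj => by
    rw [mem_filter] at hj ⊢
    exact ⟨hj.1, hcc'.trans_lt hj.2⟩

theorem leg_le : leg n l i c ≤ n - i - 1 :=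
  (card_filter_le _ _).trans (Nat.card_Ioo i n).le

theorem sub_le_leg (hl : Antitone l) {j : ℕ} (hj : j < n) (hc : c < l j) :
    j - i ≤ leg n l i c := by
  rw [← Nat.card_Ioc i j]
  refine card_le_card fun j' hj' => ?_
  rw [mem_Ioc] at hj'
  rw [mem_filter, mem_Ioo]
  exact ⟨⟨hj'.1, hj'.2.trans_lt hj⟩, hc.trans_le (hl hj'.2)⟩

theorem leg_lt_sub (hl : Antitone l) {j : ℕ} (hij : i < j) (hc : l j ≤ c) :
    leg n l i c < j - i := by
  have hsub : {j' ∈ Ioo i n | c < l j'} ⊆ Ioo i j := fun j' hj' => by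
    rw [mem_filter, mem_Ioo] at hj'
    rw [mem_Ioo]
    refine ⟨hj'.1.1, lt_of_not_ge fun hjj' => ?_⟩
    exact (hj'.2.trans_le (hl hjj')).not_ge hc
  have := (card_le_card hsub).trans_eq (Nat.card_Ioo i j)
  exact this.trans_lt (by omega)

theorem hookLength_strictAntiOn : StrictAntiOn (hookLength n l i) (Set.Iio (l i)) :=
  fun c _ c' hc' hcc' => by
    have := leg_antitone (n := n) (l := l) (i := i) hcc'.le
    simp only [hookLength, Set.mem_Iio] at hc' ⊢
    omega

theorem betaNumber_strictAntiOn (hl : Antitone l) : StrictAntiOn (betaNumber n l) (Set.Iio n) :=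
  fun i _ j hj hij => by
    have := hl hij.le
    simp only [betaNumber, Set.mem_Iio] at hj ⊢
    omega

theorem strictMonoOn_betaNumber_sub (hl : Antitone l) (hi : i < n) :
    StrictMonoOn (fun j => betaNumber n l i - betaNumber n l j) (Ioo i n) :=
  fun j hj j' hj' hjj' => by
    rw [coe_Ioo, Set.mem_Ioo] at hj hj'
    have := betaNumber_strictAntiOn hl hi hj.2 hj.1
    have := betaNumber_strictAntiOn hl hj.2 hj'.2 hjj'
    dsimp only
    omega

theorem hookLength_ne_betaNumber_sub (hl : Antitone l) (hc : c < l i) {j : ℕ}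
    (hj : j ∈ Ioo i n) :
    hookLength n l i c ≠ betaNumber n l i - betaNumber n l j := by
  rw [mem_Ioo] at hj
  have hlj := hl hj.1.le
  unfold hookLength betaNumber
  rcases lt_or_ge c (l j) with hcj | hcj
  · have := sub_le_leg hl hj.2 hcj (i := i)
    omega
  · have := leg_lt_sub hl hj.1 hcj (n := n)
    omega

theorem prod_hookLength_mul_prod_betaNumber_sub (hl : Antitone l) (hi : i < n) :
    (∏ c ∈ range (l i), hookLength n l i c) *
        ∏ j ∈ Ioo i n, (betaNumber n l i - betaNumber n l j) =
      (betaNumber n l i).factorial := by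
  rw [← prod_Ico_id_eq_factorial]
  refine prod_mul_prod_eq_prod_of_images_partition id ?_ ?_ ?_ ?_
    (fun c hc j hj => hookLength_ne_betaNumber_sub hl (mem_range.1 hc) hj) ?_
  · rw [coe_range]
    exact hookLength_strictAntiOn.injOn
  · exact (strictMonoOn_betaNumber_sub hl hi).injOn
  · intro c hc
    have := leg_le (n := n) (l := l) (i := i) (c := c)
    simp only [coe_range, Set.mem_Iio, coe_Ico, Set.mem_Ico, betaNumber] at hc ⊢
    omega
  · intro j hj
    rw [coe_Ioo, Set.mem_Ioo] at hj
    have := betaNumber_strictAntiOn hl hi hj.2 hj.1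
    simp only [coe_Ico, Set.mem_Ico]
    omega
  · simp only [Nat.card_Ico, card_range, Nat.card_Ioo, betaNumber]
    omega

theorem hookProd_mul_prod_betaNumber_sub (hl : Antitone l) :
    hookProd n l * ∏ i ∈ range n, ∏ j ∈ Ioo i n, (betaNumber n l i - betaNumber n l j) =
      ∏ i ∈ range n, (betaNumber n l i).factorial := by
  rw [hookProd_eq_prod_hookLength, ← prod_mul_distrib]
  exact prod_congr rfl fun i hi => prod_hookLength_mul_prod_betaNumber_sub hl (mem_range.1 hi)

theorem cast_betaNumber_sub {j : ℕ} (hl : Antitone l) (hij : i ≤ j) (hj : j < n) :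
    ((betaNumber n l i - betaNumber n l j : ℕ) : ℚ) =
      ((l i + (n - 1 - i)) : ℚ) - ((l j + (n - 1 - j)) : ℚ) := by
  rw [Nat.cast_sub ((betaNumber_strictAntiOn hl).antitoneOn (hij.trans_lt hj) hj hij)]
  have cast_sub_sub : ∀ k < n, ((n - 1 - k : ℕ) : ℚ) = n - 1 - k := fun k hk => by
    rw [Nat.cast_sub (by omega), Nat.cast_sub (by omega), Nat.cast_one]
  simp only [betaNumber, Nat.cast_add, cast_sub_sub i (hij.trans_lt hj), cast_sub_sub j hj]

end Hooks

theorem Fin.prod_prod_Ioi_eq_prod_range_prod_Ioo {M : Type*} [CommMonoid M] (n : ℕ)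
    (F : ℕ → ℕ → M) :
    ∏ i : Fin n, ∏ j ∈ Ioi i, F i j = ∏ i ∈ range n, ∏ j ∈ Ioo i n, F i j := by
  rw [← Fin.prod_univ_eq_prod_range]
  refine prod_congr rfl fun i _ => ?_
  rw [← Fin.map_valEmbedding_Ioi, prod_map]
  rfl

theorem stmt6_general (n : ℕ) (l : ℕ → ℕ) (hmono : Antitone l) :
    (hookProd n l : ℚ) =
      (∏ i : Fin n, ((l i + (n - 1 - (i : ℕ))).factorial : ℚ)) /
        ∏ i : Fin n, ∏ j ∈ Finset.Ioi i,
          (((l i + (n - 1 - (i : ℕ))) : ℚ) - ((l j + (n - 1 - (j : ℕ))) : ℚ)) := by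
  set Δ := ∏ i ∈ range n, ∏ j ∈ Ioo i n, (betaNumber n l i - betaNumber n l j)
  have hΔ : ∏ i : Fin n, ∏ j ∈ Ioi i,
      (((l i + (n - 1 - (i : ℕ))) : ℚ) - ((l j + (n - 1 - (j : ℕ))) : ℚ)) = Δ := by
    rw [Fin.prod_prod_Ioi_eq_prod_range_prod_Ioo n
      (fun i j => ((l i + (n - 1 - i)) : ℚ) - ((l j + (n - 1 - j)) : ℚ)), Nat.cast_prod]
    refine prod_congr rfl fun i _ => ?_
    rw [Nat.cast_prod]
    refine prod_congr rfl fun j hj => ?_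
    rw [mem_Ioo] at hj
    exact (cast_betaNumber_sub hmono hj.1.le hj.2).symm
  have hΔpos : 0 < Δ := prod_pos fun i hi => prod_pos fun j hj =>
    Nat.sub_pos_of_lt (betaNumber_strictAntiOn hmono (mem_range.1 hi) (mem_Ioo.1 hj).2
      (mem_Ioo.1 hj).1)
  rw [hΔ, eq_div_iff (by exact_mod_cast hΔpos.ne'), ← Nat.cast_mul,
    hookProd_mul_prod_betaNumber_sub hmono, Nat.cast_prod,
    Fin.prod_univ_eq_prod_range (fun i => ((l i + (n - 1 - i)).factorial : ℚ))]
  rfl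

/-- hook length formula: for a partition `λ` of length at most
`n` and `kᵢ = λᵢ + n - i`, the product of the hook lengths of `λ` equals
`∏ᵢ kᵢ! / Δ(k)` where `Δ(k) = ∏_{i<j} (kᵢ - kⱼ)`. -/
theorem stmt6 (n : ℕ) (l : ℕ → ℕ) (hmono : Antitone l)
    (hlen : ∀ i, n ≤ i → l i = 0) :
    (hookProd n l : ℚ) =
      (∏ i : Fin n, ((l i + (n - 1 - (i : ℕ))).factorial : ℚ)) /
        ∏ i : Fin n, ∏ j ∈ Finset.Ioi i,
          (((l i + (n - 1 - (i : ℕ))) : ℚ) - ((l j + (n - 1 - (j : ℕ))) : ℚ)) :=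
  stmt6_general n l hmono
end

section
/- For a partition λ of length at most n with k_i = λ_i + n − i, the principal specialization of the Schur polynomial satisfies s_λ(1, 1, …, 1) (n ones) = Δ(k_1, …, k_n) / C_n, where C_n = ∏_{i=0}^{n−1} i!. -/
open Finset MvPolynomial Matrix

private noncomputable def Fp (a b : ℕ) : Polynomial ℂ :=
  -(Polynomial.X ^ a * ∑ r ∈ Finset.range (b - a), Polynomial.X ^ r)

private lemma Fp_key (a b : ℕ) (h : a < b) :
    (Polynomial.X : Polynomial ℂ) ^ a - Polynomial.X ^ b = (Polynomial.X - 1) * Fp a b := by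
  have hb : a + (b - a) = b := Nat.add_sub_cancel' h.le
  have hgs := geom_sum_mul (Polynomial.X : Polynomial ℂ) (b - a)
  have hpow : (Polynomial.X : Polynomial ℂ) ^ a * Polynomial.X ^ (b - a) = Polynomial.X ^ b := by
    rw [← pow_add, hb]
  rw [Fp]
  linear_combination Polynomial.X ^ a * hgs + hpow

private lemma Fp_eval (a b : ℕ) :
    Polynomial.eval (1 : ℂ) (Fp a b) = -(((b - a : ℕ) : ℂ)) := by
  simp [Fp, Polynomial.eval_finset_sum]

private lemma prod_prod_mul {ι M : Type*} [CommMonoid M] (s : Finset ι) (t : ι → Finset ι)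
    (a : M) (F : ι → ι → M) :
    ∏ i ∈ s, ∏ j ∈ t i, (a * F i j)
      = a ^ (∑ i ∈ s, (t i).card) * ∏ i ∈ s, ∏ j ∈ t i, F i j := by
  calc ∏ i ∈ s, ∏ j ∈ t i, (a * F i j)
      = ∏ i ∈ s, (a ^ (t i).card * ∏ j ∈ t i, F i j) := by
        refine Finset.prod_congr rfl fun i _ => ?_
        rw [Finset.prod_mul_distrib, Finset.prod_const]
    _ = _ := by rw [Finset.prod_mul_distrib, Finset.prod_pow_eq_pow_sum]

private lemma natfac (j : ℕ) : ∏ m ∈ Finset.range j, (j - m) = j.factorial := by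
  rw [← Finset.prod_range_reflect, ← Finset.prod_range_add_one_eq_factorial]
  exact Finset.prod_congr rfl fun m hm => by have := Finset.mem_range.mp hm; omega

example (n : ℕ) :
    ∏ i : Fin n, ∏ j ∈ Finset.Ioi i, ((j : ℕ) - (i : ℕ)) = ∏ m ∈ Finset.range n, m.factorial := by
  rw [Finset.prod_comm' (t' := Finset.univ) (s' := fun j => Finset.Iio j)
    (by intro x y; simp [Finset.mem_Ioi, Finset.mem_Iio])]
  rw [← Fin.prod_univ_eq_prod_range]
  refine Finset.prod_congr rfl fun j _ => ?_
  have h1 : ∏ i ∈ Finset.Iio j, ((j : ℕ) - (i : ℕ))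
      = ∏ m ∈ Finset.Iio (j : ℕ), ((j : ℕ) - m) := by
    rw [← Fin.map_valEmbedding_Iio, Finset.prod_map]
    rfl
  rw [h1, Nat.Iio_eq_range, natfac]

private lemma factlemma (n : ℕ) :
    ∏ i : Fin n, ∏ j ∈ Finset.Ioi i, ((j : ℕ) - (i : ℕ)) = ∏ m ∈ Finset.range n, m.factorial := by
  rw [Finset.prod_comm' (t' := Finset.univ) (s' := fun j => Finset.Iio j)
    (by intro x y; simp [Finset.mem_Ioi, Finset.mem_Iio])]
  rw [← Fin.prod_univ_eq_prod_range]
  refine Finset.prod_congr rfl fun j _ => ?_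
  have h1 : ∏ i ∈ Finset.Iio j, ((j : ℕ) - (i : ℕ))
      = ∏ m ∈ Finset.Iio (j : ℕ), ((j : ℕ) - m) := by
    rw [← Fin.map_valEmbedding_Iio, Finset.prod_map]
    rfl
  rw [h1, Nat.Iio_eq_range, natfac]

/-- for a partition `λ` of length at most `n` with
`kⱼ = λⱼ + n - j`, the Schur polynomial, i.e. the (unique) polynomial `S` with
`S · Δ(z) = det(zᵢ^{kⱼ})`, satisfies `S(1,…,1) = Δ(k) / C_n`,
where `Δ(k) = ∏_{i<j}(kᵢ-kⱼ)` and `C_n = ∏_{i=0}^{n-1} i!`. -/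
theorem stmt7 (n : ℕ) (l : ℕ → ℕ) (hmono : Antitone l)
    (hlen : ∀ i, n ≤ i → l i = 0)
    (S : MvPolynomial (Fin n) ℂ)
    (hS : S * (∏ i : Fin n, ∏ j ∈ Finset.Ioi i, (X i - X j)) =
      Matrix.det (Matrix.of fun i j : Fin n =>
        (X i : MvPolynomial (Fin n) ℂ) ^ (l j + (n - 1 - (j : ℕ))))) :
    MvPolynomial.eval (fun _ => (1 : ℂ)) S =
      (∏ i : Fin n, ∏ j ∈ Finset.Ioi i,
          (((l i + (n - 1 - (i : ℕ))) : ℂ) - ((l j + (n - 1 - (j : ℕ))) : ℂ))) /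
        (∏ i ∈ Finset.range n, (i.factorial : ℂ)) := by
  classical
  set K : Fin n → ℕ := fun j => l (j : ℕ) + (n - 1 - (j : ℕ)) with hKdef
  have hKlt : ∀ i j : Fin n, i < j → K j < K i := by
    intro i j hij
    have hij' : (i : ℕ) < (j : ℕ) := hij
    have h1 : l (j : ℕ) ≤ l (i : ℕ) := hmono hij'.le
    have hj : (j : ℕ) < n := j.isLt
    simp only [hKdef]
    omega
  set N : ℕ := ∑ i : Fin n, (Finset.Ioi i).card with hNdef
  set φ : MvPolynomial (Fin n) ℂ →ₐ[ℂ] Polynomial ℂ :=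
    MvPolynomial.aeval fun i : Fin n => (Polynomial.X : Polynomial ℂ) ^ (i : ℕ) with hφdef
  have hS' : S * (∏ i : Fin n, ∏ j ∈ Finset.Ioi i, (X i - X j)) =
      Matrix.det (Matrix.of fun i j : Fin n =>
        (X i : MvPolynomial (Fin n) ℂ) ^ (K j)) := hS
  have h2 := congrArg φ hS'
  rw [_root_.map_mul] at h2
  have hP : φ (∏ i : Fin n, ∏ j ∈ Finset.Ioi i, (X i - X j))
      = ∏ i : Fin n, ∏ j ∈ Finset.Ioi i,
          ((Polynomial.X : Polynomial ℂ) ^ (i : ℕ) - Polynomial.X ^ (j : ℕ)) := by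
    rw [map_prod]
    refine Finset.prod_congr rfl fun i _ => ?_
    rw [map_prod]
    refine Finset.prod_congr rfl fun j _ => ?_
    simp [hφdef]
  have hdet : φ (Matrix.det (Matrix.of fun i j : Fin n =>
        (X i : MvPolynomial (Fin n) ℂ) ^ (K j)))
      = ∏ i : Fin n, ∏ j ∈ Finset.Ioi i,
          ((Polynomial.X : Polynomial ℂ) ^ (K j) - Polynomial.X ^ (K i)) := by
    rw [show φ (Matrix.det (Matrix.of fun i j : Fin n =>
        (X i : MvPolynomial (Fin n) ℂ) ^ (K j)))
      = Matrix.det ((Matrix.of fun i j : Fin n =>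
        (X i : MvPolynomial (Fin n) ℂ) ^ (K j)).map φ) from RingHom.map_det φ.toRingHom _]
    have hm : (Matrix.of fun i j : Fin n =>
        (X i : MvPolynomial (Fin n) ℂ) ^ (K j)).map φ
        = (Matrix.vandermonde fun j : Fin n => (Polynomial.X : Polynomial ℂ) ^ (K j))ᵀ := by
      ext i j
      simp only [Matrix.map_apply, Matrix.of_apply, Matrix.transpose_apply,
        Matrix.vandermonde, hφdef, map_pow, MvPolynomial.aeval_X, Matrix.of_apply]
      rw [← pow_mul, ← pow_mul, Nat.mul_comm]
    rw [hm, Matrix.det_transpose, Matrix.det_vandermonde]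
  rw [hP, hdet] at h2
  have hPf : (∏ i : Fin n, ∏ j ∈ Finset.Ioi i,
        ((Polynomial.X : Polynomial ℂ) ^ (i : ℕ) - Polynomial.X ^ (j : ℕ)))
      = (Polynomial.X - 1) ^ N * ∏ i : Fin n, ∏ j ∈ Finset.Ioi i, Fp (i : ℕ) (j : ℕ) := by
    rw [← prod_prod_mul]
    refine Finset.prod_congr rfl fun i _ => Finset.prod_congr rfl fun j hj => ?_
    exact Fp_key _ _ (by exact_mod_cast Finset.mem_Ioi.mp hj)
  have hQf : (∏ i : Fin n, ∏ j ∈ Finset.Ioi i,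
        ((Polynomial.X : Polynomial ℂ) ^ (K j) - Polynomial.X ^ (K i)))
      = (Polynomial.X - 1) ^ N * ∏ i : Fin n, ∏ j ∈ Finset.Ioi i, Fp (K j) (K i) := by
    rw [← prod_prod_mul]
    refine Finset.prod_congr rfl fun i _ => Finset.prod_congr rfl fun j hj => ?_
    exact Fp_key _ _ (hKlt i j (Finset.mem_Ioi.mp hj))
  rw [hPf, hQf] at h2
  have hX1 : (Polynomial.X - 1 : Polynomial ℂ) ≠ 0 := by
    intro h
    have := congrArg (Polynomial.eval 0) h
    simp at this
  have hc : φ S * (∏ i : Fin n, ∏ j ∈ Finset.Ioi i, Fp (i : ℕ) (j : ℕ))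
      = ∏ i : Fin n, ∏ j ∈ Finset.Ioi i, Fp (K j) (K i) := by
    apply mul_left_cancel₀ (pow_ne_zero N hX1)
    linear_combination h2
  have heval := congrArg (Polynomial.eval (1 : ℂ)) hc
  simp only [Polynomial.eval_mul, Polynomial.eval_prod, Fp_eval] at heval
  have heS : Polynomial.eval (1 : ℂ) (φ S) = MvPolynomial.eval (fun _ => (1 : ℂ)) S := by
    have hcomp : (Polynomial.aeval (1 : ℂ)).comp φ
        = MvPolynomial.aeval (fun _ : Fin n => (1 : ℂ)) := by
      apply MvPolynomial.algHom_ext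
      intro i
      simp [hφdef]
    have h4 := AlgHom.congr_fun hcomp S
    simpa using h4
  have hsgn : ∀ F : Fin n → Fin n → ℂ,
      (∏ i : Fin n, ∏ j ∈ Finset.Ioi i, -F i j)
        = (-1 : ℂ) ^ N * ∏ i : Fin n, ∏ j ∈ Finset.Ioi i, F i j := by
    intro F
    rw [← prod_prod_mul]
    exact Finset.prod_congr rfl fun i _ => Finset.prod_congr rfl fun j _ =>
      (neg_one_mul _).symm
  rw [heS, hsgn, hsgn] at heval
  have hne : ((-1 : ℂ)) ^ N ≠ 0 := pow_ne_zero _ (by norm_num)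
  have h5 : MvPolynomial.eval (fun _ => (1 : ℂ)) S
        * ∏ i : Fin n, ∏ j ∈ Finset.Ioi i, (((j : ℕ) - (i : ℕ) : ℕ) : ℂ)
      = ∏ i : Fin n, ∏ j ∈ Finset.Ioi i, ((K i - K j : ℕ) : ℂ) := by
    apply mul_left_cancel₀ hne
    linear_combination heval
  have hA : (∏ i : Fin n, ∏ j ∈ Finset.Ioi i, (((j : ℕ) - (i : ℕ) : ℕ) : ℂ))
      = ∏ m ∈ Finset.range n, (m.factorial : ℂ) := by
    rw [← Nat.cast_prod]
    rw [show (∏ i : Fin n, ∏ j ∈ Finset.Ioi i, (((j : ℕ) - (i : ℕ) : ℕ) : ℂ))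
      = ((∏ i : Fin n, ∏ j ∈ Finset.Ioi i, ((j : ℕ) - (i : ℕ)) : ℕ) : ℂ) by push_cast; rfl]
    rw [factlemma]
  have hB : (∏ i : Fin n, ∏ j ∈ Finset.Ioi i, ((K i - K j : ℕ) : ℂ))
      = ∏ i : Fin n, ∏ j ∈ Finset.Ioi i, ((K i : ℂ) - (K j : ℂ)) := by
    refine Finset.prod_congr rfl fun i _ => Finset.prod_congr rfl fun j hj => ?_
    exact Nat.cast_sub (hKlt i j (Finset.mem_Ioi.mp hj)).le
  have hCf : (∏ m ∈ Finset.range n, (m.factorial : ℂ)) ≠ 0 :=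
    Finset.prod_ne_zero_iff.mpr fun m _ => Nat.cast_ne_zero.mpr m.factorial_ne_zero
  rw [eq_div_iff hCf]
  calc MvPolynomial.eval (fun _ => (1 : ℂ)) S * ∏ m ∈ Finset.range n, (m.factorial : ℂ)
      = MvPolynomial.eval (fun _ => (1 : ℂ)) S
        * ∏ i : Fin n, ∏ j ∈ Finset.Ioi i, (((j : ℕ) - (i : ℕ) : ℕ) : ℂ) := by rw [hA]
    _ = ∏ i : Fin n, ∏ j ∈ Finset.Ioi i, ((K i : ℂ) - (K j : ℂ)) := by rw [h5, hB]
    _ = _ := by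
        refine Finset.prod_congr rfl fun i _ => Finset.prod_congr rfl fun j _ => ?_
        have hi := i.isLt
        have hj := j.isLt
        have e : ∀ m : Fin n, ((K m : ℕ) : ℂ)
            = (l (m : ℕ) : ℂ) + ((n : ℂ) - 1 - ((m : ℕ) : ℂ)) := by
          intro m
          have hm := m.isLt
          simp only [hKdef]
          rw [Nat.cast_add, Nat.cast_sub (show (m : ℕ) ≤ n - 1 by omega),
            Nat.cast_sub (show 1 ≤ n by omega), Nat.cast_one]
        rw [e i, e j]
end

section
/- For the rectangular partition (k^l) (l rows of length k), the product of hook lengths satisfies h((k^l)) = C_{k+l} / (C_k · C_l), where C_n = ∏_{i=0}^{n−1} i!. -/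
open Finset

/-- `C_n = ∏_{i=0}^{n-1} i!`. -/
def superfact (n : ℕ) : ℕ := ∏ i ∈ Finset.range n, i.factorial

lemma lemA (k a : ℕ) : (∏ j ∈ range k, (a + 1 + j)) * a.factorial = (a + k).factorial := by
  induction k with
  | zero => simp
  | succ n ih =>
    rw [prod_range_succ, mul_right_comm, ih, show a + (n+1) = (a+n)+1 from by ring,
      Nat.factorial_succ]
    ring

lemma lemF (k a : ℕ) : (∏ j ∈ range k, (k + a - j)) * a.factorial = (k + a).factorial := by
  have h := lemA k a
  rw [← Finset.prod_range_reflect] at h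
  have : (∏ j ∈ range k, (k + a - j)) = ∏ j ∈ range k, (a + 1 + (k - 1 - j)) := by
    apply Finset.prod_congr rfl
    intro j hj
    simp only [mem_range] at hj
    omega
  rw [this, h]
  congr 1; omega

lemma hookProd_rect (k l : ℕ) :
    hookProd l (fun i => if i < l then k else 0) =
      ∏ i ∈ range l, ∏ j ∈ range k, (k + (l - 1 - i) - j) := by
  unfold hookProd
  apply Finset.prod_congr rfl
  intro i hi
  simp only [mem_range] at hi
  simp only [hi, if_true]
  apply Finset.prod_congr rfl
  intro j hj
  simp only [mem_range] at hj
  have hcard : ((Finset.Ico (i+1) l).filter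
      (fun i' => j < if i' < l then k else 0)).card = l - (i+1) := by
    rw [Finset.filter_true_of_mem, Nat.card_Ico]
    intro x hx
    simp only [Finset.mem_Ico] at hx
    rw [if_pos hx.2]; exact hj
  rw [hcard]
  omega

lemma natmain (k l : ℕ) :
    hookProd l (fun i => if i < l then k else 0) * (superfact k * superfact l) =
      superfact (k + l) := by
  rw [hookProd_rect]
  have h1 : (∏ i ∈ range l, ∏ j ∈ range k, (k + (l - 1 - i) - j)) =
      ∏ i ∈ range l, ∏ j ∈ range k, (k + i - j) :=
    Finset.prod_range_reflect (fun i => ∏ j ∈ range k, (k + i - j)) l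
  rw [h1]
  unfold superfact
  rw [Finset.prod_range_add]
  rw [mul_comm ((∏ i ∈ range l, ∏ j ∈ range k, (k + i - j))), mul_assoc]
  congr 1
  rw [← Finset.prod_mul_distrib]
  apply Finset.prod_congr rfl
  intro i _
  rw [mul_comm]
  exact lemF k i

/-- for the rectangular partition `(k^l)`,
`h((k^l)) = C_{k+l} / (C_k C_l)`. -/
theorem stmt8 (k l : ℕ) :
    (hookProd l (fun i => if i < l then k else 0) : ℚ) =
      (superfact (k + l) : ℚ) / ((superfact k : ℚ) * (superfact l : ℚ)) := by
  have hk : (0:ℚ) < superfact k := by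
    unfold superfact; push_cast
    exact Finset.prod_pos fun i _ => by positivity
  have hl : (0:ℚ) < superfact l := by
    unfold superfact; push_cast
    exact Finset.prod_pos fun i _ => by positivity
  rw [eq_div_iff (by positivity)]
  exact_mod_cast natmain k l
end

section
/- The coefficient b_s(μ,ν) appearing in the Schur function identity admits two equal expressions: h((n^m)) / [h(μ) h(ν + (s^n)) h((μ + (s^m) + (n^m)) ∪ ν')] = 1/[h(μ) h(ν) h(μ+(s^m)) h(ν+(s^n))] · ∏_{i=1}^m ∏_{j=1}^n (m+n−i−j+1)/(μ_i + ν_j + m+n−i−j+s+1), for partitions μ of length ≤ m, ν of length ≤ n, and a nonnegative integer s. In particular this expression is symmetric under swapping (μ, m) with (ν, n). -/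
/-!
Index rows and columns from 0. In the diagram `λ = (μ + (s^m) + (n^m)) ∪ ν'` a box `(i, j)` with
`i < m`, `j < n` has arm `μ i + s + n - j - 1` and leg `(m - i - 1) + ν j`, because column `j` of
`ν'` has length `ν j`; so its hook is `μ i + ν j + s + m + n - i - j - 1`. The boxes of the first
`m` rows right of column `n` form `μ + (s^m)` with unchanged hooks, and the rows below form `ν'`,
whose hook product is that of `ν`. Hence
`h(λ) = h(μ + (s^m)) h(ν) ∏ (μ i + ν j + s + m + n - i - j - 1)`, while
`h((n^m)) = ∏ (m + n - i - j - 1)`; substituting both gives the identity.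
-/

open Finset

/-- The conjugate (transpose) of a partition of length at most `L`. -/
def conjPart (L : ℕ) (l : ℕ → ℕ) (j : ℕ) : ℕ :=
  ((Finset.range L).filter (fun i => j < l i)).card

lemma card_filter_Ico_add_left (m a b : ℕ) (p : ℕ → Prop) [DecidablePred p] :
    #((Ico (m + a) (m + b)).filter p) = #((Ico a b).filter (fun k => p (m + k))) := by
  rw [← map_add_left_Ico, filter_map, card_map]
  rfl

section Conjugate

variable {n : ℕ} {ν : ℕ → ℕ}

lemma conjPart_antitone (n : ℕ) (ν : ℕ → ℕ) : Antitone (conjPart n ν) :=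
  fun _ _ hab => card_le_card fun i hi => by
    simp only [mem_filter] at hi ⊢
    exact ⟨hi.1, lt_of_le_of_lt hab hi.2⟩

lemma conjPart_eq_zero_of_le (hν : Antitone ν) {k : ℕ} (hk : ν 0 ≤ k) : conjPart n ν k = 0 := by
  refine card_eq_zero.2 <| filter_false_of_mem fun i _ => ?_
  have := hν (Nat.zero_le i)
  omega

lemma lt_conjPart_iff (hν : Antitone ν) (hνlen : ∀ i, n ≤ i → ν i = 0) (j k : ℕ) :
    j < conjPart n ν k ↔ k < ν j := by
  constructor
  · intro hj
    by_contra! hk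
    have : (range n).filter (fun i => k < ν i) ⊆ range j := fun i hi => by
      simp only [mem_filter, mem_range] at hi ⊢
      by_contra! hij
      have := hν hij
      omega
    have := card_le_card this
    rw [card_range] at this
    exact absurd hj (not_lt.2 this)
  · intro hk
    have hjn : j < n := by
      by_contra! hj
      rw [hνlen j hj] at hk
      omega
    have : range (j + 1) ⊆ (range n).filter (fun i => k < ν i) := fun i hi => by
      simp only [mem_range] at hi
      simp only [mem_filter, mem_range]
      exact ⟨by omega, lt_of_lt_of_le hk (hν (by omega))⟩
    have := card_le_card this
    rw [card_range] at this
    exact this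

lemma conjPart_conjPart (hν : Antitone ν) (hνlen : ∀ i, n ≤ i → ν i = 0) (j : ℕ) :
    conjPart (ν 0) (conjPart n ν) j = ν j :=
  eq_of_forall_lt_iff fun t => by
    rw [lt_conjPart_iff (conjPart_antitone n ν) (fun _ => conjPart_eq_zero_of_le hν),
      lt_conjPart_iff hν hνlen]

end Conjugate

lemma hookProd_ite (n : ℕ) (l : ℕ → ℕ) :
    hookProd n (fun i => if i < n then l i else 0) = hookProd n l := by
  unfold hookProd
  refine prod_congr rfl fun i hi => ?_
  simp only [if_pos (mem_range.1 hi)]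
  refine prod_congr rfl fun j _ => ?_
  congr 2
  exact filter_congr fun i' hi' => by rw [if_pos (mem_Ico.1 hi').2]

lemma hookProd_pos (n : ℕ) (l : ℕ → ℕ) : 0 < hookProd n l :=
  prod_pos fun _ _ => prod_pos fun j hj => by
    have := mem_range.1 hj
    omega

section Hooks

variable {n : ℕ} {l : ℕ → ℕ}

lemma card_filter_Ico_add_eq_conjPart (hl : Antitone l) {i j : ℕ} (hi : i < n) (hj : j < l i) :
    #((Ico (i + 1) n).filter (fun i' => j < l i')) + (i + 1) = conjPart n l j := by
  have hsplit : (range n).filter (fun i' => j < l i') =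
      (range (i + 1)).filter (fun i' => j < l i') ∪
        (Ico (i + 1) n).filter (fun i' => j < l i') := by
    rw [← filter_union, range_eq_Ico, range_eq_Ico, Ico_union_Ico_eq_Ico (Nat.zero_le _) hi]
  have hdisj : Disjoint ((range (i + 1)).filter (fun i' => j < l i'))
      ((Ico (i + 1) n).filter (fun i' => j < l i')) :=
    disjoint_filter_filter (by rw [range_eq_Ico]; exact Ico_disjoint_Ico_consecutive 0 (i + 1) n)
  have hfull : (range (i + 1)).filter (fun i' => j < l i') = range (i + 1) :=
    filter_true_of_mem fun i' hi' => lt_of_lt_of_le hj (hl (by simpa [Nat.lt_succ_iff] using hi'))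
  rw [conjPart, hsplit, card_union_of_disjoint hdisj, hfull, card_range, add_comm]

lemma hookProd_eq_prod_arm_add_leg (hl : Antitone l) :
    hookProd n l = ∏ i ∈ range n, ∏ j ∈ range (l i), (l i + conjPart n l j - (i + j + 1)) :=
  prod_congr rfl fun i hi => prod_congr rfl fun j hj => by
    have := card_filter_Ico_add_eq_conjPart hl (mem_range.1 hi) (mem_range.1 hj)
    have := mem_range.1 hj
    omega

lemma hookProd_conjPart (hl : Antitone l) (hllen : ∀ i, n ≤ i → l i = 0) :
    hookProd (l 0) (conjPart n l) = hookProd n l := by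
  rw [hookProd_eq_prod_arm_add_leg hl, hookProd_eq_prod_arm_add_leg (conjPart_antitone n l),
    prod_sigma', prod_sigma']
  simp only [conjPart_conjPart hl hllen]
  refine prod_nbij' (fun p => ⟨p.2, p.1⟩) (fun p => ⟨p.2, p.1⟩) ?_ ?_ (fun _ _ => rfl)
    (fun _ _ => rfl) fun p _ => by dsimp only; ring_nf
  · rintro ⟨j, i⟩ hp
    simp only [mem_sigma, mem_range, lt_conjPart_iff hl hllen] at hp ⊢
    refine ⟨?_, hp.2⟩
    by_contra! h
    have := hllen i h
    omega
  · rintro ⟨i, j⟩ hp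
    simp only [mem_sigma, mem_range, lt_conjPart_iff hl hllen] at hp ⊢
    exact ⟨lt_of_lt_of_le hp.2 (hl (Nat.zero_le i)), hp.2⟩

end Hooks

/-- Each box of the top `m` rows gains, as extra leg, the boxes of its column below row `m`. -/
lemma hookProd_add (m L : ℕ) (l : ℕ → ℕ) :
    hookProd (m + L) l =
      (∏ i ∈ range m, ∏ j ∈ range (l i),
        (l i - j + #((Ico (i + 1) m).filter (fun i' => j < l i')) +
          conjPart L (fun k => l (m + k)) j)) * hookProd L (fun k => l (m + k)) := by
  unfold hookProd
  rw [prod_range_add]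
  congr 1
  · refine prod_congr rfl fun i hi => prod_congr rfl fun j _ => ?_
    have hdisj : Disjoint ((Ico (i + 1) m).filter (fun i' => j < l i'))
        ((Ico m (m + L)).filter (fun i' => j < l i')) :=
      disjoint_filter_filter (Ico_disjoint_Ico_consecutive _ _ _)
    rw [← Ico_union_Ico_eq_Ico (Nat.succ_le_of_lt (mem_range.1 hi)) (Nat.le_add_right m L),
      filter_union, card_union_of_disjoint hdisj, ← add_assoc]
    have := card_filter_Ico_add_left m 0 L (fun i' => j < l i')
    rw [add_zero, ← range_eq_Ico] at this
    rw [this, conjPart]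
  · refine prod_congr rfl fun k _ => prod_congr rfl fun j _ => ?_
    rw [add_assoc, card_filter_Ico_add_left]

lemma hookProd_stack_conjPart {m n : ℕ} {ν : ℕ → ℕ} (hν : Antitone ν)
    (hνlen : ∀ i, n ≤ i → ν i = 0) (a : ℕ → ℕ) :
    hookProd (m + ν 0) (fun i => if i < m then a i + n else conjPart n ν (i - m)) =
      (∏ i ∈ range m, ∏ j ∈ range n, (a i + ν j + m + n - (i + j + 1))) *
        hookProd m a * hookProd n ν := by
  have hlow : (fun k => if m + k < m then a (m + k) + n else conjPart n ν (m + k - m)) =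
      conjPart n ν := by
    funext k
    simp
  rw [hookProd_add, hlow, hookProd_conjPart hν hνlen]
  congr 1
  rw [hookProd, ← prod_mul_distrib]
  refine prod_congr rfl fun i hi => ?_
  have hi : i < m := mem_range.1 hi
  simp only [if_pos hi, conjPart_conjPart hν hνlen]
  rw [add_comm (a i) n, prod_range_add]
  congr 1
  · refine prod_congr rfl fun j hj => ?_
    have hj : j < n := mem_range.1 hj
    rw [filter_true_of_mem fun i' hi' => by simp only [if_pos (mem_Ico.1 hi').2]; omega,
      Nat.card_Ico]
    omega
  · refine prod_congr rfl fun t _ => ?_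
    rw [hνlen (n + t) (Nat.le_add_right n t), add_zero]
    have : (Ico (i + 1) m).filter
          (fun i' => n + t < if i' < m then a i' + n else conjPart n ν (i' - m)) =
        (Ico (i + 1) m).filter (fun i' => t < a i') :=
      filter_congr fun i' hi' => by simp only [if_pos (mem_Ico.1 hi').2]; omega
    rw [this]
    omega

lemma hookProd_rectangle (m n : ℕ) :
    hookProd m (fun _ => n) = ∏ i ∈ range m, ∏ j ∈ range n, (m + n - (i + j + 1)) :=
  prod_congr rfl fun i hi => prod_congr rfl fun j hj => by
    dsimp only
    rw [filter_true_of_mem fun _ _ => mem_range.1 hj, Nat.card_Ico]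
    have := mem_range.1 hi
    have := mem_range.1 hj
    omega

theorem stmt11_general (m n s : ℕ) (μ ν : ℕ → ℕ)
    (hν : Antitone ν) (hνlen : ∀ i, n ≤ i → ν i = 0) :
    (hookProd m (fun i => if i < m then n else 0) : ℚ) /
        ((hookProd m μ : ℚ) *
          (hookProd n (fun i => if i < n then ν i + s else 0) : ℚ) *
          (hookProd (m + ν 0) (fun i =>
            if i < m then μ i + s + n else conjPart n ν (i - m)) : ℚ)) =
      (1 / ((hookProd m μ : ℚ) * (hookProd n ν : ℚ) *
          (hookProd m (fun i => if i < m then μ i + s else 0) : ℚ) *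
          (hookProd n (fun i => if i < n then ν i + s else 0) : ℚ))) *
        ∏ i ∈ Finset.range m, ∏ j ∈ Finset.range n,
          (((m : ℚ) + n - i - j - 1) /
            ((μ i : ℚ) + (ν j : ℚ) + s + m + n - i - j - 1)) := by
  have hcross : ∏ i ∈ range m, ∏ j ∈ range n,
      (((m : ℚ) + n - i - j - 1) / ((μ i : ℚ) + (ν j : ℚ) + s + m + n - i - j - 1)) =
      ((∏ i ∈ range m, ∏ j ∈ range n, (m + n - (i + j + 1)) : ℕ) : ℚ) /
        ((∏ i ∈ range m, ∏ j ∈ range n, (μ i + s + ν j + m + n - (i + j + 1)) : ℕ) : ℚ) := by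
    simp only [Nat.cast_prod, ← prod_div_distrib]
    refine prod_congr rfl fun i hi => prod_congr rfl fun j hj => ?_
    have : i + j + 1 ≤ m + n := by
      simp only [mem_range] at hi hj
      omega
    rw [Nat.cast_sub this, Nat.cast_sub (by omega : i + j + 1 ≤ μ i + s + ν j + m + n)]
    push_cast
    ring
  rw [hookProd_ite m (fun _ => n), hookProd_rectangle, hookProd_ite m (fun i => μ i + s),
    hookProd_stack_conjPart hν hνlen (fun i => μ i + s), hcross]
  have := hookProd_pos m μ
  have := hookProd_pos n ν
  have := hookProd_pos m (fun i => μ i + s)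
  have := hookProd_pos n (fun i => if i < n then ν i + s else 0)
  have : 0 < ∏ i ∈ range m, ∏ j ∈ range n, (μ i + s + ν j + m + n - (i + j + 1)) :=
    prod_pos fun i hi => prod_pos fun j hj => by
      simp only [mem_range] at hi hj
      omega
  push_cast
  field_simp

/-- the two expressions for the coefficient `b_s(μ,ν)` agree:
`h((n^m)) / (h(μ) h(ν+(s^n)) h((μ+(s^m)+(n^m)) ∪ ν'))
 = (1/(h(μ)h(ν)h(μ+(s^m))h(ν+(s^n)))) ·
   ∏_{i=1}^m ∏_{j=1}^n (m+n-i-j+1)/(μᵢ+νⱼ+m+n-i-j+s+1)`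
for partitions `μ` of length `≤ m` and `ν` of length `≤ n` and `s ∈ ℕ`
(products below are written with 0-indexed `i, j`). -/
theorem stmt11 (m n s : ℕ) (μ ν : ℕ → ℕ)
    (hμ : Antitone μ) (hμlen : ∀ i, m ≤ i → μ i = 0)
    (hν : Antitone ν) (hνlen : ∀ i, n ≤ i → ν i = 0) :
    (hookProd m (fun i => if i < m then n else 0) : ℚ) /
        ((hookProd m μ : ℚ) *
          (hookProd n (fun i => if i < n then ν i + s else 0) : ℚ) *
          (hookProd (m + ν 0) (fun i =>
            if i < m then μ i + s + n else conjPart n ν (i - m)) : ℚ)) =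
      (1 / ((hookProd m μ : ℚ) * (hookProd n ν : ℚ) *
          (hookProd m (fun i => if i < m then μ i + s else 0) : ℚ) *
          (hookProd n (fun i => if i < n then ν i + s else 0) : ℚ))) *
        ∏ i ∈ Finset.range m, ∏ j ∈ Finset.range n,
          (((m : ℚ) + n - i - j - 1) /
            ((μ i : ℚ) + (ν j : ℚ) + s + m + n - i - j - 1)) :=
  stmt11_general m n s μ ν hν hνlen
end

section
/- Suppose the identity C·∑_k Δ(k)/∏_i(k_i!(k_i+s)!) z^k = ∑_k [Δ(k_1,…,k_m)Δ(k_{m+1},…,k_{m+n}) / ∏_i(k_i!(k_i+s)!)] ∏_{i≤m, j≥m+1} (z_i − z_j)/(k_i+k_j+s+1) z^k holds, as formal power series in z_1,…,z_{m+n}, for some constant C and parameters (m, n, s) with s a nonnegative integer. Then setting z_{m+n} = 0, dividing through by z_1⋯z_{m+n−1} and re-indexing k_i ↦ k_i + 1 yields the same identity with the same constant C for parameters (m, n−1, s+1). -/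
/-!
Put `z_{m+n} = 0`. Only exponents with `k_{m+n} = 0` survive, and every surviving
coefficient of parameters `(m, n, s)` at `(k + 1, 0)` is `1 / s!` times the coefficient of
parameters `(m, n - 1, s + 1)` at `k`, on both sides.

On the left the extra Vandermonde factors `k_j + 1 - 0` cancel against
`(k_j + 1)! (k_j + 1 + s)! = (k_j + 1) k_j! (k_j + s + 1)!`, and the last index contributes `0! s!`.

On the right, killing the last variable turns the factors `z_a - z_{m+n}` into `z_a`, so the
cross polynomial of `(m, n)` becomes `z_1 ⋯ z_m` times that of `(m, n - 1)`. Hence only summation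
indices `l` with `l_{m+n} = 0` and `l_a ≤ k_a` on the first block contribute, and those with
some `l_j = 0` on the second block vanish because `Δ(l_{m+1}, …, l_{m+n})` contains
`l_j - l_{m+n}`. The remaining indices are `(l_1, …, l_m, l_{m+1} + 1, …, l_{m+n-1} + 1, 0)`,
and for them the factors `1 / (l_a + 0 + s + 1)` coming from `j = m + n` turn `(l_a + s)!` into
`(l_a + s + 1)!`.
-/

open Finset MvPolynomial

/-- The coefficient of `z^k` in `C ∑_k Δ(k)/∏ᵢ(kᵢ!(kᵢ+s)!) z^k`. -/
noncomputable def lhsCoeff (C : ℂ) (m n s : ℕ) (k : Fin (m + n) → ℕ) : ℂ :=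
  C * (∏ i : Fin (m + n), ∏ j ∈ Finset.Ioi i, ((k i : ℂ) - (k j : ℂ))) /
    ∏ i : Fin (m + n), (((k i).factorial : ℂ) * ((k i + s).factorial : ℂ))

/-- The coefficient of `z^k` in
`∑_l [Δ(l₁)Δ(l₂)/∏ᵢ(lᵢ!(lᵢ+s)!)] ∏_{i≤m,j≥m+1} (zᵢ-zⱼ)/(lᵢ+lⱼ+s+1) z^l`. -/
noncomputable def rhsCoeff (m n s : ℕ) (k : Fin (m + n) → ℕ) : ℂ :=
  ∑ l ∈ Finset.Icc (0 : Fin (m + n) → ℕ) k,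
    ((∏ a : Fin m, ∏ b ∈ Finset.Ioi a,
        ((l (Fin.castAdd n a) : ℂ) - (l (Fin.castAdd n b) : ℂ))) *
      (∏ a : Fin n, ∏ b ∈ Finset.Ioi a,
        ((l (Fin.natAdd m a) : ℂ) - (l (Fin.natAdd m b) : ℂ))) /
      (∏ i : Fin (m + n), (((l i).factorial : ℂ) * ((l i + s).factorial : ℂ))) *
      (∏ a : Fin m, ∏ b : Fin n,
        (1 / ((l (Fin.castAdd n a) : ℂ) + (l (Fin.natAdd m b) : ℂ) + s + 1))) *
      MvPolynomial.coeff
        (Finsupp.equivFunOnFinite.symm (fun i => k i - l i))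
        (∏ a : Fin m, ∏ b : Fin n,
          (X (Fin.castAdd n a) - X (Fin.natAdd m b) :
            MvPolynomial (Fin (m + n)) ℂ)))

open Nat

theorem Fin.prod_Ioi_castSucc {M : Type*} [CommMonoid M] {N : ℕ} (f : Fin (N + 1) → M)
    (i : Fin N) : ∏ j ∈ Ioi i.castSucc, f j = (∏ j ∈ Ioi i, f j.castSucc) * f (Fin.last N) := by
  simp only [← Finset.filter_lt_eq_Ioi, prod_filter, Fin.prod_univ_castSucc,
    Fin.castSucc_lt_castSucc_iff, if_pos (Fin.castSucc_lt_last i)]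

noncomputable section Weights

variable {N : ℕ}

def succSnocZero (f : Fin N → ℕ) : Fin (N + 1) → ℕ := Fin.snoc (fun i => f i + 1) 0

@[simp]
lemma succSnocZero_castSucc (f : Fin N → ℕ) (i : Fin N) : succSnocZero f i.castSucc = f i + 1 :=
  Fin.snoc_castSucc ..

@[simp]
lemma succSnocZero_last (f : Fin N → ℕ) : succSnocZero f (Fin.last N) = 0 :=
  Fin.snoc_last ..

def vandProd (f : Fin N → ℕ) : ℂ := ∏ i, ∏ j ∈ Ioi i, ((f i : ℂ) - f j)

def vandWeight (s : ℕ) (f : Fin N → ℕ) : ℂ := vandProd f / ∏ i, ((f i)! * (f i + s)! : ℂ)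

lemma vandProd_snoc (f : Fin N → ℕ) (c : ℕ) :
    vandProd (Fin.snoc f c : Fin (N + 1) → ℕ) = vandProd f * ∏ i, ((f i : ℂ) - c) := by
  have : Ioi (Fin.last N) = ∅ := Ioi_eq_empty.mpr isMax_top
  simp only [vandProd, Fin.prod_univ_castSucc, Fin.prod_Ioi_castSucc, Fin.snoc_castSucc,
    Fin.snoc_last, prod_mul_distrib, this, prod_empty, mul_one]

lemma vandProd_add_const (f : Fin N → ℕ) (c : ℕ) : vandProd (fun i => f i + c) = vandProd f := by
  simp only [vandProd, cast_add, add_sub_add_right_eq_sub]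

lemma vandProd_eq_zero {f : Fin N → ℕ} {i j : Fin N} (hij : i < j) (h : f i = f j) :
    vandProd f = 0 :=
  prod_eq_zero (mem_univ i) (prod_eq_zero (mem_Ioi.mpr hij) (by simp [h]))

lemma vandWeight_succ (s : ℕ) (f : Fin N → ℕ) :
    vandWeight (s + 1) f = vandWeight s f / ∏ i, ((f i : ℂ) + s + 1) := by
  simp only [vandWeight, div_div, ← prod_mul_distrib, ← add_assoc, factorial_succ]
  push_cast
  congr 2 with i
  ring

lemma vandWeight_succSnocZero (s : ℕ) (f : Fin N → ℕ) :
    vandWeight s (succSnocZero f) * s ! = vandWeight (s + 1) f := by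
  have hden : ∀ i, (((f i + 1)! : ℂ) * (f i + 1 + s)!) =
      (f i + 1 : ℂ) * ((f i)! * (f i + (s + 1))!) := by
    intro i
    rw [show f i + 1 + s = f i + (s + 1) by omega, factorial_succ (f i)]
    push_cast
    ring
  have hprod : ∏ i, ((f i : ℂ) + 1) ≠ 0 := prod_ne_zero_iff.mpr fun i _ => cast_add_one_ne_zero _
  rw [vandWeight, vandWeight, succSnocZero, vandProd_snoc, vandProd_add_const,
    Fin.prod_univ_castSucc]
  simp only [Fin.snoc_castSucc, Fin.snoc_last, hden, prod_mul_distrib, cast_add, cast_one,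
    cast_zero, sub_zero, factorial_zero, zero_add, one_mul]
  field_simp
  exact mul_div_mul_right _ _ (by exact_mod_cast factorial_ne_zero s)

variable {m n : ℕ}

def crossWeight (s : ℕ) (x : Fin m → ℕ) (y : Fin n → ℕ) : ℂ :=
  ∏ a, ∏ b, 1 / ((x a : ℂ) + y b + s + 1)

lemma crossWeight_succSnocZero (s : ℕ) (x : Fin m → ℕ) (y : Fin n → ℕ) :
    crossWeight s x (succSnocZero y) =
      crossWeight (s + 1) x y / ∏ a, ((x a : ℂ) + s + 1) := by
  rw [crossWeight, crossWeight, div_eq_mul_inv, ← prod_inv_distrib, ← prod_mul_distrib]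
  refine prod_congr rfl fun a _ => ?_
  rw [Fin.prod_univ_castSucc]
  simp only [succSnocZero_castSucc, succSnocZero_last, cast_add, cast_one, cast_zero, add_zero,
    one_div]
  congr 1
  refine prod_congr rfl fun b _ => ?_
  ring_nf

lemma weights_succSnocZero (s : ℕ) (x : Fin m → ℕ) (y : Fin n → ℕ) :
    vandWeight s x * vandWeight s (succSnocZero y) *
        crossWeight s x (succSnocZero y) * s ! =
      vandWeight (s + 1) x * vandWeight (s + 1) y * crossWeight (s + 1) x y := by
  rw [vandWeight_succ s x, ← vandWeight_succSnocZero, crossWeight_succSnocZero]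
  ring

end Weights

noncomputable section CrossPoly

variable {m n : ℕ}

def firstBlock (m n : ℕ) : Fin (m + n) →₀ ℕ := ∑ a : Fin m, Finsupp.single (Fin.castAdd n a) 1

lemma firstBlock_castAdd (a : Fin m) : firstBlock m n (Fin.castAdd n a) = 1 := by
  simp [firstBlock, Finsupp.single_apply]

lemma firstBlock_natAdd (b : Fin n) : firstBlock m n (Fin.natAdd m b) = 0 := by
  simp only [firstBlock, Finsupp.finsetSum_apply, Finsupp.single_apply, Fin.ext_iff,
    Fin.val_castAdd, Fin.val_natAdd]
  exact sum_eq_zero fun a _ => if_neg (by omega)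

variable (R : Type*) [CommRing R]

def crossPoly (m n : ℕ) : MvPolynomial (Fin (m + n)) R :=
  ∏ a : Fin m, ∏ b : Fin n, (X (Fin.castAdd n a) - X (Fin.natAdd m b))

lemma killCompl_X_castSucc {N : ℕ} (i : Fin N) :
    killCompl (Fin.castSucc_injective N) (X i.castSucc : MvPolynomial (Fin (N + 1)) R) = X i := by
  rw [← rename_X, killCompl_rename_app]

lemma killCompl_X_last {N : ℕ} :
    killCompl (Fin.castSucc_injective N) (X (Fin.last N) : MvPolynomial (Fin (N + 1)) R) = 0 := by
  rw [killCompl, aeval_X, dif_neg]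
  rintro ⟨i, hi⟩
  exact Fin.castSucc_ne_last i hi

lemma killCompl_crossPoly_succ :
    killCompl (Fin.castSucc_injective (m + n)) (crossPoly R m (n + 1)) =
      crossPoly R m n * monomial (firstBlock m n) 1 := by
  rw [firstBlock, monomial_sum_one, crossPoly, crossPoly, map_prod, ← prod_mul_distrib]
  refine prod_congr rfl fun a _ => ?_
  simp only [Fin.prod_univ_castSucc, map_mul, map_prod, map_sub, ← Fin.castSucc_castAdd,
    Fin.natAdd_castSucc, Fin.natAdd_last, killCompl_X_castSucc, killCompl_X_last, sub_zero]
  rfl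

lemma coeff_crossPoly_succ (d : Fin (m + (n + 1)) → ℕ) (hd : d (Fin.last (m + n)) = 0) :
    coeff (Finsupp.equivFunOnFinite.symm d) (crossPoly R m (n + 1)) =
      coeff (Finsupp.equivFunOnFinite.symm fun i => d i.castSucc)
        (crossPoly R m n * monomial (firstBlock m n) 1) := by
  rw [← killCompl_crossPoly_succ, coeff_killCompl]
  congr 1
  ext j
  induction j using Fin.lastCases with
  | last =>
    rw [Finsupp.mapDomain_of_notMem_range _ _ fun ⟨i, hi⟩ => Fin.castSucc_ne_last i hi]
    simpa using hd
  | cast i => simp [Finsupp.mapDomain_apply (Fin.castSucc_injective _)]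

end CrossPoly

noncomputable section Reindexing

variable {m n : ℕ}

def crossCoeff (m n : ℕ) (k l : Fin (m + n) → ℕ) : ℂ :=
  coeff (Finsupp.equivFunOnFinite.symm fun i => k i - l i) (crossPoly ℂ m n)

def rhsTerm (m n s : ℕ) (k l : Fin (m + n) → ℕ) : ℂ :=
  vandWeight s (fun a => l (Fin.castAdd n a)) * vandWeight s (fun b => l (Fin.natAdd m b)) *
    crossWeight s (fun a => l (Fin.castAdd n a)) (fun b => l (Fin.natAdd m b)) * crossCoeff m n k l

lemma rhsCoeff_eq_sum_rhsTerm (s : ℕ) (k : Fin (m + n) → ℕ) :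
    rhsCoeff m n s k = ∑ l ∈ Icc 0 k, rhsTerm m n s k l := by
  refine sum_congr rfl fun l _ => ?_
  rw [rhsTerm, vandWeight, vandWeight, vandProd, vandProd, crossWeight, crossCoeff, crossPoly,
    Fin.prod_univ_add]
  ring

def shiftIndex (m n : ℕ) (l : Fin (m + n) → ℕ) : Fin (m + (n + 1)) → ℕ :=
  Fin.append (fun a => l (Fin.castAdd n a)) (succSnocZero fun b => l (Fin.natAdd m b))

@[simp]
lemma shiftIndex_castAdd (l : Fin (m + n) → ℕ) (a : Fin m) :
    shiftIndex m n l (Fin.castAdd (n + 1) a) = l (Fin.castAdd n a) :=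
  Fin.append_left _ _ a

@[simp]
lemma shiftIndex_natAdd (l : Fin (m + n) → ℕ) (b : Fin (n + 1)) :
    shiftIndex m n l (Fin.natAdd m b) = succSnocZero (fun b => l (Fin.natAdd m b)) b :=
  Fin.append_right _ _ b

@[simp]
lemma shiftIndex_castSucc_castAdd (l : Fin (m + n) → ℕ) (a : Fin m) :
    shiftIndex m n l (Fin.castAdd n a).castSucc = l (Fin.castAdd n a) :=
  Fin.append_left _ _ a

@[simp]
lemma shiftIndex_castSucc_natAdd (l : Fin (m + n) → ℕ) (b : Fin n) :
    shiftIndex m n l (Fin.natAdd m b).castSucc = l (Fin.natAdd m b) + 1 := by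
  rw [← Fin.natAdd_castSucc, shiftIndex_natAdd, succSnocZero_castSucc]

@[simp]
lemma shiftIndex_last (l : Fin (m + n) → ℕ) : shiftIndex m n l (Fin.last (m + n)) = 0 := by
  rw [← Fin.natAdd_last, shiftIndex_natAdd, succSnocZero_last]

lemma crossCoeff_shiftIndex {k l : Fin (m + n) → ℕ} (hl : l ≤ k) :
    crossCoeff m (n + 1) (succSnocZero k) (shiftIndex m n l) = crossCoeff m n k l := by
  rw [crossCoeff, coeff_crossPoly_succ, crossCoeff, ← mul_one (coeff _ (crossPoly ℂ m n)),
    ← coeff_mul_monomial _ (firstBlock m n)]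
  · congr 1
    ext i
    refine Fin.addCases (fun a => ?_) (fun b => ?_) i
    · simp only [succSnocZero_castSucc, shiftIndex_castSucc_castAdd, Finsupp.coe_add,
        Finsupp.coe_equivFunOnFinite_symm, Pi.add_apply, firstBlock_castAdd]
      have : l (Fin.castAdd n a) ≤ k (Fin.castAdd n a) := hl _
      omega
    · simp [firstBlock_natAdd, Fin.castSucc_natAdd]
  · simp [succSnocZero]

lemma rhsTerm_shiftIndex (s : ℕ) {k l : Fin (m + n) → ℕ} (hl : l ≤ k) :
    rhsTerm m (n + 1) s (succSnocZero k) (shiftIndex m n l) * s ! = rhsTerm m n (s + 1) k l := by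
  simp only [rhsTerm, crossCoeff_shiftIndex hl, shiftIndex_castAdd, shiftIndex_natAdd]
  rw [← weights_succSnocZero]
  ring

lemma shiftIndex_injective : Function.Injective (shiftIndex m n) := by
  intro l l' h
  funext i
  refine Fin.addCases (fun a => ?_) (fun b => ?_) i
  · simpa using congrFun h (Fin.castAdd n a).castSucc
  · simpa using congrFun h (Fin.natAdd m b).castSucc

lemma shiftIndex_le {k l : Fin (m + n) → ℕ} (hl : l ≤ k) : shiftIndex m n l ≤ succSnocZero k := by
  intro i
  induction i using Fin.lastCases with
  | last => simp
  | cast i =>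
    refine Fin.addCases (fun a => ?_) (fun b => ?_) i
    · simpa only [shiftIndex_castSucc_castAdd, succSnocZero_castSucc] using (hl _).trans (le_succ _)
    · simpa only [shiftIndex_castSucc_natAdd, succSnocZero_castSucc] using succ_le_succ (hl _)

lemma exists_shiftIndex_eq {k : Fin (m + n) → ℕ} {L : Fin (m + n + 1) → ℕ}
    (hL : L ≤ succSnocZero k) (hx : ∀ a, L (Fin.castAdd n a).castSucc ≤ k (Fin.castAdd n a))
    (hy : ∀ b, L (Fin.natAdd m b).castSucc ≠ 0) : ∃ l ∈ Icc 0 k, shiftIndex m n l = L := by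
  refine ⟨Fin.append (fun a => L (Fin.castAdd n a).castSucc)
    (fun b => L (Fin.natAdd m b).castSucc - 1), mem_Icc.mpr ⟨fun _ => zero_le _, fun i => ?_⟩, ?_⟩
  · refine Fin.addCases (fun a => ?_) (fun b => ?_) i
    · simpa using hx a
    · have := hL (Fin.natAdd m b).castSucc
      simp only [succSnocZero_castSucc] at this
      simp only [Fin.append_right]
      omega
  · refine funext fun i : Fin (m + n + 1) => ?_
    induction i using Fin.lastCases with
    | last =>
      have := hL (Fin.last _)
      rw [succSnocZero_last, nonpos_iff_eq_zero] at this
      rw [shiftIndex_last, this]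
    | cast i =>
      refine Fin.addCases (fun a => ?_) (fun b => ?_) i
      · simp
      · simp only [shiftIndex_castSucc_natAdd, Fin.append_right]
        have := hy b
        omega

lemma crossCoeff_eq_zero {k : Fin (m + n) → ℕ} {L : Fin (m + n + 1) → ℕ}
    (hlast : L (Fin.last (m + n)) = 0) {a : Fin m}
    (ha : k (Fin.castAdd n a) < L (Fin.castAdd n a).castSucc) :
    crossCoeff m (n + 1) (succSnocZero k) L = 0 := by
  rw [crossCoeff, coeff_crossPoly_succ, coeff_mul_monomial', if_neg]
  · intro hle
    have := hle (Fin.castAdd n a)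
    simp only [firstBlock_castAdd, Finsupp.equivFunOnFinite_symm_apply_apply,
      succSnocZero_castSucc] at this
    omega
  · simp [hlast]

lemma rhsTerm_eq_zero (s : ℕ) {k : Fin (m + n) → ℕ} {L : Fin (m + n + 1) → ℕ}
    (hL : L ≤ succSnocZero k) (hL' : L ∉ (Icc 0 k).image (shiftIndex m n)) :
    rhsTerm m (n + 1) s (succSnocZero k) L = 0 := by
  have hlast : L (Fin.last (m + n)) = 0 := by simpa using hL (Fin.last _)
  by_cases hy : ∃ b : Fin n, L (Fin.natAdd m b).castSucc = 0
  · obtain ⟨b, hb⟩ := hy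
    have : vandProd (fun b => L (Fin.natAdd m b)) = 0 :=
      vandProd_eq_zero (Fin.castSucc_lt_last b)
        (by rw [Fin.natAdd_castSucc, Fin.natAdd_last, hb, hlast])
    simp [rhsTerm, vandWeight, this]
  by_cases hx : ∀ a, L (Fin.castAdd n a).castSucc ≤ k (Fin.castAdd n a)
  · push Not at hy
    obtain ⟨l, hl, rfl⟩ := exists_shiftIndex_eq hL hx hy
    exact absurd (mem_image_of_mem _ hl) hL'
  · push Not at hx
    obtain ⟨a, ha⟩ := hx
    simp [rhsTerm, crossCoeff_eq_zero hlast ha]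

lemma rhsCoeff_succSnocZero (s : ℕ) (k : Fin (m + n) → ℕ) :
    rhsCoeff m (n + 1) s (succSnocZero k) * s ! = rhsCoeff m n (s + 1) k := by
  have hsub : (Icc 0 k).image (shiftIndex m n) ⊆ Icc 0 (succSnocZero k) := by
    simp only [image_subset_iff, mem_Icc]
    exact fun l hl => ⟨fun _ => zero_le _, shiftIndex_le hl.2⟩
  rw [rhsCoeff_eq_sum_rhsTerm, rhsCoeff_eq_sum_rhsTerm, sum_mul,
    ← sum_subset hsub fun L hL hL' => by rw [rhsTerm_eq_zero s (mem_Icc.mp hL).2 hL', zero_mul],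
    sum_image fun l _ l' _ h => shiftIndex_injective h]
  exact sum_congr rfl fun l hl => rhsTerm_shiftIndex s (mem_Icc.mp hl).2

lemma lhsCoeff_succSnocZero (C : ℂ) (m n s : ℕ) (k : Fin (m + n) → ℕ) :
    lhsCoeff C m (n + 1) s (succSnocZero k) * s ! = lhsCoeff C m n (s + 1) k := by
  rw [lhsCoeff, lhsCoeff, mul_div_assoc, mul_div_assoc, mul_assoc]
  exact congrArg (C * ·) (vandWeight_succSnocZero s k)

end Reindexing

/-- if the identity
`C ∑ Δ(k)/∏(kᵢ!(kᵢ+s)!) z^k = ∑ [Δ(k₁…k_m)Δ(k_{m+1}…k_{m+n})/∏(kᵢ!(kᵢ+s)!)]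
∏(zᵢ-zⱼ)/(kᵢ+kⱼ+s+1) z^k` holds (coefficientwise, i.e. as formal power
series) for parameters `(m, n, s)` and constant `C`, then the same identity
with the same constant `C` holds for parameters `(m, n-1, s+1)`. -/
theorem stmt14 (C : ℂ) (m n s : ℕ) (hn : 1 ≤ n)
    (h : ∀ k : Fin (m + n) → ℕ, lhsCoeff C m n s k = rhsCoeff m n s k) :
    ∀ k : Fin (m + (n - 1)) → ℕ,
      lhsCoeff C m (n - 1) (s + 1) k = rhsCoeff m (n - 1) (s + 1) k := by
  obtain ⟨n, rfl⟩ : ∃ n', n = n' + 1 := ⟨n - 1, by omega⟩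
  intro k
  calc lhsCoeff C m n (s + 1) k = lhsCoeff C m (n + 1) s (succSnocZero k) * s ! :=
        (lhsCoeff_succSnocZero C m n s k).symm
    _ = rhsCoeff m (n + 1) s (succSnocZero k) * s ! := by rw [h]
    _ = rhsCoeff m n (s + 1) k := rhsCoeff_succSnocZero s k
end
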